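/- The partial derivative of the call price C with respect to the interest rate r (the Rho) equals (T-t)Ke^{-r(T-t)}Φ(d_{t,2}^α) + (αt/σ)e^{rt}(Φ(d_{t,1}^α) - Φ(d_{t,2}^α)). -/

import Mathlib

open Real

/-- Standard normal CDF. -/
noncomputable def Phi (d : ℝ) : ℝ :=
  ∫ u in Set.Iic d, Real.exp (-u ^ 2 / 2) / Real.sqrt (2 * Real.pi)

/-- d_{t,1}^α of the crisis model. -/
noncomputable def d1 (s K σ α r t T : ℝ) : ℝ :=
  (Real.log ((s + α / σ * Real.exp (r * t)) / (K + α / σ * Real.exp (r * T)))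
    + (r + σ ^ 2 / 2) * (T - t)) / (σ * Real.sqrt (T - t))

/-- d_{t,2}^α of the crisis model. -/
noncomputable def d2 (s K σ α r t T : ℝ) : ℝ :=
  d1 s K σ α r t T - σ * Real.sqrt (T - t)

/-- Crisis-model European call price. -/
noncomputable def C (s K σ α r t T : ℝ) : ℝ :=
  (s + α / σ * Real.exp (r * t)) * Phi (d1 s K σ α r t T)
    - (K * Real.exp (-r * (T - t)) + α / σ * Real.exp (r * t)) * Phi (d2 s K σ α r t T)

/-!
Since `d₂ = d₁ - σ√(T-t)` differ by a constant, they have the same derivative `D` in `r`.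
The terms of `∂C/∂r` carrying `D` are `A φ(d₁) D - B φ(d₂) D`, where `A` and `B` are the
coefficients of `Φ(d₁)` and `Φ(d₂)` in `C`, and they cancel by the Black–Scholes identity
`A φ(d₁) = B φ(d₂)`: completing the square, `φ(d₂) / φ(d₁) = exp (d₁ σ√(T-t) - σ²(T-t)/2)`,
which by the definition of `d₁` is `A / B`. Only the derivatives of the coefficients remain.
-/

open MeasureTheory

theorem hasDerivAt_integral_Iic {f : ℝ → ℝ} (hf : Integrable f) (hf_cont : Continuous f)
    (d : ℝ) : HasDerivAt (fun x => ∫ u in Set.Iic x, f u) (f d) d := by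
  have h_split : (fun x => ∫ u in Set.Iic x, f u) =
      fun x => (∫ u in Set.Iic d, f u) + ∫ u in d..x, f u := by
    funext x
    linarith [intervalIntegral.integral_Iic_sub_Iic hf.integrableOn hf.integrableOn (a := d) (b := x)]
  rw [h_split]
  exact (intervalIntegral.integral_hasDerivAt_right hf.intervalIntegrable
    hf_cont.aestronglyMeasurable.stronglyMeasurableAtFilter hf_cont.continuousAt).const_add _

noncomputable def phi (u : ℝ) : ℝ := Real.exp (-u ^ 2 / 2) / Real.sqrt (2 * Real.pi)

theorem integrable_phi : Integrable phi := by
  have h := (integrable_exp_neg_mul_sq (by norm_num : (0 : ℝ) < 1 / 2)).div_const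
    (Real.sqrt (2 * Real.pi))
  convert h using 3 with u
  unfold phi
  ring_nf

theorem hasDerivAt_Phi (d : ℝ) : HasDerivAt Phi (phi d) d :=
  hasDerivAt_integral_Iic integrable_phi (by unfold phi; fun_prop) d

theorem mul_phi_eq_mul_phi_sub {a b v d : ℝ} (ha : 0 < a) (hb : 0 < b)
    (hd : d * v = Real.log (a / b) + v ^ 2 / 2) :
    a * phi d = b * phi (d - v) := by
  have h_exp : Real.exp (-(d - v) ^ 2 / 2) = Real.exp (-d ^ 2 / 2) * (a / b) := by
    rw [← Real.exp_log (div_pos ha hb), ← Real.exp_add]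
    congr 1
    linear_combination hd
  rw [phi, phi, h_exp]
  field_simp

theorem HasDerivAt.mul_Phi_sub_mul_Phi {A B f g : ℝ → ℝ} {A' B' D r : ℝ}
    (hA : HasDerivAt A A' r) (hB : HasDerivAt B B' r)
    (hf : HasDerivAt f D r) (hg : HasDerivAt g D r) (h_cancel : A r * phi (f r) = B r * phi (g r)) :
    HasDerivAt (fun ρ => A ρ * Phi (f ρ) - B ρ * Phi (g ρ)) (A' * Phi (f r) - B' * Phi (g r)) r := by
  refine ((hA.mul ((hasDerivAt_Phi _).comp r hf)).sub
    (hB.mul ((hasDerivAt_Phi _).comp r hg))).congr_deriv ?_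
  simp only [Function.comp_apply]
  linear_combination D * h_cancel

theorem strike_discount_eq (K σ α r t T : ℝ) :
    K * Real.exp (-r * (T - t)) + α / σ * Real.exp (r * t) =
      (K + α / σ * Real.exp (r * T)) * Real.exp (-r * (T - t)) := by
  rw [add_mul, mul_assoc, ← Real.exp_add]
  ring_nf

theorem mul_phi_d1_eq_mul_phi_d2 {s K σ α r t T : ℝ} (hσ : 0 < σ) (htT : t < T)
    (h1 : 0 < s + α / σ * Real.exp (r * t)) (h2 : 0 < K + α / σ * Real.exp (r * T)) :
    (s + α / σ * Real.exp (r * t)) * phi (d1 s K σ α r t T) =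
      (K * Real.exp (-r * (T - t)) + α / σ * Real.exp (r * t)) * phi (d2 s K σ α r t T) := by
  have h_vol : 0 < σ * Real.sqrt (T - t) := mul_pos hσ (Real.sqrt_pos.2 (sub_pos.2 htT))
  have h_sq : (σ * Real.sqrt (T - t)) ^ 2 = σ ^ 2 * (T - t) := by
    rw [mul_pow, Real.sq_sqrt (sub_pos.2 htT).le]
  rw [strike_discount_eq]
  refine mul_phi_eq_mul_phi_sub h1 (mul_pos h2 (Real.exp_pos _)) ?_
  rw [d1, div_mul_cancel₀ _ h_vol.ne', div_mul_eq_div_div,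
    Real.log_div (div_pos h1 h2).ne' (Real.exp_pos _).ne', Real.log_exp, h_sq]
  ring

theorem differentiableAt_d1 {s K σ α r t T : ℝ}
    (h1 : 0 < s + α / σ * Real.exp (r * t)) (h2 : 0 < K + α / σ * Real.exp (r * T)) :
    DifferentiableAt ℝ (fun ρ => d1 s K σ α ρ t T) r := by
  have h_ratio : (s + α / σ * Real.exp (r * t)) / (K + α / σ * Real.exp (r * T)) ≠ 0 :=
    (div_pos h1 h2).ne'
  have h_den := h2.ne'
  unfold d1
  fun_prop (disch := assumption)

theorem crisis_rho_general (s K σ α r t T : ℝ)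
    (hσ : 0 < σ) (htT : t < T)
    (h1 : 0 < s + α / σ * Real.exp (r * t))
    (h2 : 0 < K + α / σ * Real.exp (r * T)) :
    HasDerivAt (fun ρ => C s K σ α ρ t T)
      ((T - t) * K * Real.exp (-r * (T - t)) * Phi (d2 s K σ α r t T)
        + α * t / σ * Real.exp (r * t) *
          (Phi (d1 s K σ α r t T) - Phi (d2 s K σ α r t T))) r := by
  have h_exp (c : ℝ) : HasDerivAt (fun ρ => Real.exp (ρ * c)) (Real.exp (r * c) * c) r := by
    simpa using ((hasDerivAt_id r).mul_const c).exp
  have hA := ((h_exp t).const_mul (α / σ)).const_add s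
  have h_discount : HasDerivAt (fun ρ => Real.exp (-ρ * (T - t)))
      (Real.exp (-r * (T - t)) * -(T - t)) r := by
    simpa using ((hasDerivAt_neg r).mul_const (T - t)).exp
  have hB : HasDerivAt (fun ρ => K * Real.exp (-ρ * (T - t)) + α / σ * Real.exp (ρ * t)) _ r :=
    (h_discount.const_mul K).add ((h_exp t).const_mul (α / σ))
  have hd1 := (differentiableAt_d1 h1 h2).hasDerivAt
  have hd2 : HasDerivAt (fun ρ => d2 s K σ α ρ t T) (deriv (fun ρ => d1 s K σ α ρ t T) r) r :=
    hd1.sub_const _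
  have h := hA.mul_Phi_sub_mul_Phi hB hd1 hd2 (mul_phi_d1_eq_mul_phi_d2 hσ htT h1 h2)
  exact h.congr_deriv (by ring)

/-- Rho of the crisis-model call. -/
theorem crisis_rho (s K σ α r t T : ℝ)
    (hs : 0 < s) (hK : 0 < K) (hσ : 0 < σ) (hα : 0 ≤ α)
    (ht : 0 ≤ t) (htT : t < T)
    (h1 : 0 < s + α / σ * Real.exp (r * t))
    (h2 : 0 < K + α / σ * Real.exp (r * T)) :
    HasDerivAt (fun ρ => C s K σ α ρ t T)
      ((T - t) * K * Real.exp (-r * (T - t)) * Phi (d2 s K σ α r t T)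
        + α * t / σ * Real.exp (r * t) *
          (Phi (d1 s K σ α r t T) - Phi (d2 s K σ α r t T))) r :=
  crisis_rho_general s K σ α r t T hσ htT h1 h2
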